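/- Let G be a graph and w a vertex of G of degree less than q. If all proper q-colourings of G \ w are Kempe equivalent, then all proper q-colourings of G are Kempe equivalent. -/

import Mathlib

/-! Restrict `c₁` and `c₂` to `G - w`, join the restrictions by Kempe moves there, and lift the
moves one at a time. A move of `G - w` swapping `a, b` on a chain is the restriction of the same
move of `G` as long as `w` has at most one neighbour in the `{a, b}`-subgraph,
because a path cannot pass through a vertex of degree one. Otherwise `w` is coloured `a` (say)
and has two neighbours coloured `b`; as `deg w < q`, some colour outside `{a, b}` is then missing
around `w`, and recolouring `w` with it, a Kempe move on the single vertex `w`, detaches `w` from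
the chain. At the end `w` is recoloured with `c₂ w`, which none of its neighbours carries. -/

open SimpleGraph

variable {V : Type*}

/-- Topological embedding of a simple graph in a space `S`. -/
def SimpleGraph.EmbedsIn (G : SimpleGraph V) (S : Type*) [TopologicalSpace S] : Prop :=
  ∃ (φ : V → S) (γ : ∀ u v, G.Adj u v → _root_.Path (φ u) (φ v)),
    Function.Injective φ ∧
    (∀ u v (h : G.Adj u v), Function.Injective (γ u v h : unitInterval → S)) ∧
    (∀ u v (h : G.Adj u v), γ v u h.symm = (γ u v h).symm) ∧
    (∀ u v (h : G.Adj u v) (t : unitInterval),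
        (γ u v h) t ∈ Set.range φ → t = 0 ∨ t = 1) ∧
    (∀ u v u' v' (h : G.Adj u v) (h' : G.Adj u' v') (t₁ t₂ : unitInterval),
        s(u, v) ≠ s(u', v') → (γ u v h) t₁ = (γ u' v' h') t₂ →
        (γ u v h) t₁ ∈ Set.range φ)

/-- The 2-sphere. -/
abbrev Sphere2 : Type := Metric.sphere (0 : EuclideanSpace ℝ (Fin 3)) 1

/-- The torus. -/
abbrev Torus2 : Type := AddCircle (1 : ℝ) × AddCircle (1 : ℝ)

/-- `G` is `d`-degenerate: every nonempty (induced) subgraph has a vertex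
of degree at most `d`. -/
def SimpleGraph.IsDegenerate (G : SimpleGraph V) (d : ℕ) : Prop :=
  ∀ s : Set V, s.Nonempty → ∃ v ∈ s, ({u ∈ s | G.Adj v u}).ncard ≤ d

/-- A proper colouring with `q` colours. -/
def SimpleGraph.IsProperColoring (G : SimpleGraph V) {q : ℕ} (c : V → Fin q) : Prop :=
  ∀ ⦃u v⦄, G.Adj u v → c u ≠ c v

/-- The subgraph of `G` induced by the vertices coloured `a` or `b`. -/
def SimpleGraph.kempeGraph (G : SimpleGraph V) {q : ℕ} (c : V → Fin q) (a b : Fin q) :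
    SimpleGraph V :=
  SimpleGraph.fromRel fun u v => G.Adj u v ∧ (c u = a ∨ c u = b) ∧ (c v = a ∨ c v = b)

/-- A Kempe move: swap colours `a` and `b` on the connected component of `v₀`
in the subgraph induced by the vertices coloured `a` or `b`. -/
def SimpleGraph.KempeStep (G : SimpleGraph V) {q : ℕ} (c₁ c₂ : V → Fin q) : Prop :=
  ∃ (a b : Fin q) (v₀ : V),
    (∀ v, (G.kempeGraph c₁ a b).Reachable v₀ v → c₂ v = Equiv.swap a b (c₁ v)) ∧
    (∀ v, ¬ (G.kempeGraph c₁ a b).Reachable v₀ v → c₂ v = c₁ v)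

/-- Kempe equivalence: a finite sequence of Kempe moves. -/
def SimpleGraph.KempeEquiv (G : SimpleGraph V) {q : ℕ} (c₁ c₂ : V → Fin q) : Prop :=
  Relation.ReflTransGen (G.KempeStep) c₁ c₂


namespace SimpleGraph

variable {G : SimpleGraph V} {q : ℕ}

theorem kempeGraph_adj {c : V → Fin q} {a b : Fin q} {u v : V} :
    (G.kempeGraph c a b).Adj u v ↔
      G.Adj u v ∧ (c u = a ∨ c u = b) ∧ (c v = a ∨ c v = b) := by
  simp only [kempeGraph, fromRel_adj]
  constructor
  · rintro ⟨-, h | h⟩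
    exacts [h, ⟨h.1.symm, h.2.2, h.2.1⟩]
  · intro h
    exact ⟨h.1.ne, Or.inl h⟩

theorem kempeGraph_induce (s : Set V) (c : V → Fin q) (a b : Fin q) :
    (G.induce s).kempeGraph (s.domRestrict c) a b = (G.kempeGraph c a b).induce s := by
  ext u v
  simp [kempeGraph_adj, Set.domRestrict_apply]

theorem Reachable.induce_of_subsingleton_neighborSet {s : Set V}
    (hs : ∀ v ∉ s, (G.neighborSet v).Subsingleton) {u v : s} (h : G.Reachable u v) :
    (G.induce s).Reachable u v := by
  obtain ⟨p, hp⟩ := h.exists_isPath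
  refine ⟨(p.induce s fun x hx => ?_).copy rfl rfl⟩
  by_contra hxs
  exact hp.isTrail.not_mem_support_of_subsingleton_neighborSet
    (fun h => hxs (by rw [h]; exact u.2)) (fun h => hxs (by rw [h]; exact v.2)) (hs x hxs) hx

theorem eq_of_reachable_of_forall_not_adj {w v : V} (hw : ∀ u, ¬ G.Adj w u)
    (h : G.Reachable w v) : v = w := by
  obtain ⟨p⟩ := h
  cases p with
  | nil => rfl
  | cons hadj _ => exact absurd hadj (hw _)

open Classical in
noncomputable def kempeSwap (G : SimpleGraph V) (c : V → Fin q) (a b : Fin q) (v₀ : V) :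
    V → Fin q :=
  fun v => if (G.kempeGraph c a b).Reachable v₀ v then Equiv.swap a b (c v) else c v

theorem kempeStep_kempeSwap (c : V → Fin q) (a b : Fin q) (v₀ : V) :
    G.KempeStep c (G.kempeSwap c a b v₀) :=
  ⟨a, b, v₀, fun _ hv => if_pos hv, fun _ hv => if_neg hv⟩

theorem KempeStep.exists_eq_kempeSwap {c₁ c₂ : V → Fin q} (h : G.KempeStep c₁ c₂) :
    ∃ a b v₀, c₂ = G.kempeSwap c₁ a b v₀ := by
  obtain ⟨a, b, v₀, hr, hnr⟩ := h
  refine ⟨a, b, v₀, funext fun v => ?_⟩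
  unfold kempeSwap
  split_ifs with hv
  exacts [hr v hv, hnr v hv]

theorem kempeGraph_adj_of_swap_eq {c : V → Fin q} (hc : G.IsProperColoring c) {a b : Fin q}
    {u v : V} (huv : G.Adj u v) (h : Equiv.swap a b (c u) = c v) :
    (G.kempeGraph c a b).Adj u v := by
  have hu : a ≠ b ∧ (c u = a ∨ c u = b) :=
    Equiv.swap_apply_ne_self_iff.1 (h ▸ (hc huv).symm)
  refine kempeGraph_adj.2 ⟨huv, hu.2, ?_⟩
  rcases hu.2 with hua | hub
  · rw [hua, Equiv.swap_apply_left] at h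
    exact Or.inr h.symm
  · rw [hub, Equiv.swap_apply_right] at h
    exact Or.inl h.symm

theorem IsProperColoring.kempeSwap {c : V → Fin q} (hc : G.IsProperColoring c) (a b : Fin q)
    (v₀ : V) : G.IsProperColoring (G.kempeSwap c a b v₀) := by
  intro u v huv heq
  unfold SimpleGraph.kempeSwap at heq
  split_ifs at heq with hu hv hv
  · exact hc huv ((Equiv.swap a b).injective heq)
  · exact hv (hu.trans (kempeGraph_adj_of_swap_eq hc huv heq).reachable)
  · exact hu (hv.trans (kempeGraph_adj_of_swap_eq hc huv.symm heq.symm).reachable)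
  · exact hc huv heq

theorem IsProperColoring.of_kempeEquiv {c₁ c₂ : V → Fin q} (hc : G.IsProperColoring c₁)
    (h : G.KempeEquiv c₁ c₂) : G.IsProperColoring c₂ := by
  induction h with
  | refl => exact hc
  | tail _ hstep ih =>
    obtain ⟨a, b, v₀, rfl⟩ := hstep.exists_eq_kempeSwap
    exact ih.kempeSwap a b v₀

theorem kempeStep_update [DecidableEq V] {c : V → Fin q} {w : V} {e : Fin q}
    (hw : ∀ u, G.Adj w u → c u ≠ c w) (he : ∀ u, G.Adj w u → c u ≠ e) :
    G.KempeStep c (Function.update c w e) := by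
  have hiso : ∀ u, ¬ (G.kempeGraph c (c w) e).Adj w u := fun u hu => by
    obtain ⟨hwu, -, hcu | hcu⟩ := kempeGraph_adj.1 hu
    exacts [hw u hwu hcu, he u hwu hcu]
  convert kempeStep_kempeSwap c (c w) e w using 1
  funext v
  unfold kempeSwap
  by_cases hv : v = w
  · subst hv
    simp
  · rw [Function.update_of_ne hv, if_neg fun h => hv (eq_of_reachable_of_forall_not_adj hiso h)]

theorem domRestrict_kempeSwap {s : Set V} {c : V → Fin q} {a b : Fin q}
    (hs : ∀ v ∉ s, ((G.kempeGraph c a b).neighborSet v).Subsingleton) (v₀ : s) :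
    s.domRestrict (G.kempeSwap c a b v₀) = (G.induce s).kempeSwap (s.domRestrict c) a b v₀ := by
  have hreach : ∀ v : s, (G.kempeGraph c a b).Reachable v₀ v ↔
      ((G.induce s).kempeGraph (s.domRestrict c) a b).Reachable v₀ v := by
    intro v
    rw [kempeGraph_induce]
    exact ⟨Reachable.induce_of_subsingleton_neighborSet hs,
      fun h => h.map (Embedding.induce s).toHom⟩
  funext v
  simp only [Set.domRestrict_apply, kempeSwap]
  classical
  exact if_congr (hreach v) rfl rfl

theorem exists_ne_forall_adj_ne [Fintype V] [DecidableRel G.Adj] {α : Type*} [Fintype α]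
    (c : V → α) {w u₁ u₂ : V} (hdeg : G.degree w < Fintype.card α) (h₁ : G.Adj w u₁)
    (h₂ : G.Adj w u₂) (hne : u₁ ≠ u₂) (hc : c u₁ = c u₂) :
    ∃ e, e ≠ c w ∧ ∀ u, G.Adj w u → c u ≠ e := by
  classical
  let used := insert (c w) (((G.neighborFinset w).erase u₂).image c)
  have hused : used.card < (Finset.univ : Finset α).card := by
    calc used.card ≤ ((G.neighborFinset w).erase u₂).card + 1 :=
          (Finset.card_insert_le _ _).trans (by grw [Finset.card_image_le])
      _ = G.degree w := by
          rw [Finset.card_erase_of_mem ((G.mem_neighborFinset w u₂).2 h₂),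
            card_neighborFinset_eq_degree]
          have : 0 < G.degree w := G.degree_pos_iff_exists_adj w |>.2 ⟨u₂, h₂⟩
          omega
      _ < _ := hdeg
  obtain ⟨e, -, he⟩ := Finset.exists_mem_notMem_of_card_lt_card hused
  refine ⟨e, fun h => he (h ▸ Finset.mem_insert_self _ _), fun u hu hue => he ?_⟩
  refine Finset.mem_insert_of_mem (Finset.mem_image.2 ?_)
  by_cases hu₂ : u = u₂
  · exact ⟨u₁, Finset.mem_erase.2 ⟨hne, (G.mem_neighborFinset w u₁).2 h₁⟩,
      hc.trans (hu₂ ▸ hue)⟩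
  · exact ⟨u, Finset.mem_erase.2 ⟨hu₂, (G.mem_neighborFinset w u).2 hu⟩, hue⟩

theorem IsProperColoring.domRestrict {c : V → Fin q} (hc : G.IsProperColoring c) (s : Set V) :
    (G.induce s).IsProperColoring (s.domRestrict c) :=
  fun _ _ huv => hc huv

section LiftAlongVertexDeletion

variable [Fintype V] [DecidableRel G.Adj] {w : V}

theorem exists_kempeEquiv_domRestrict_eq_kempeSwap (hdeg : G.degree w < q) {c : V → Fin q}
    (hc : G.IsProperColoring c) (a b : Fin q) (v₀ : {v : V | v ≠ w}) :
    ∃ c', G.KempeEquiv c c' ∧ {v | v ≠ w}.domRestrict c' =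
      (G.induce {v | v ≠ w}).kempeSwap ({v | v ≠ w}.domRestrict c) a b v₀ := by
  classical
  have houtside : ∀ {c : V → Fin q}, ((G.kempeGraph c a b).neighborSet w).Subsingleton →
      ∀ v ∉ {v : V | v ≠ w}, ((G.kempeGraph c a b).neighborSet v).Subsingleton := by
    intro c h v hv
    rwa [show v = w by simpa using hv]
  by_cases hsub : ((G.kempeGraph c a b).neighborSet w).Subsingleton
  · exact ⟨_, .single (kempeStep_kempeSwap c a b v₀),
      domRestrict_kempeSwap (houtside hsub) v₀⟩
  obtain ⟨u₁, hu₁, u₂, hu₂, hne⟩ := Set.not_subsingleton_iff.1 hsub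
  obtain ⟨hwu₁, hcw, hcu₁⟩ := kempeGraph_adj.1 hu₁
  obtain ⟨hwu₂, -, hcu₂⟩ := kempeGraph_adj.1 hu₂
  have hcu₁w := hc hwu₁
  have hcu₂w := hc hwu₂
  have hab : ∀ x, (x = a ∨ x = b) → x = c w ∨ x = c u₁ := by grind
  obtain ⟨e, hew, he⟩ := exists_ne_forall_adj_ne c
    (hdeg.trans_eq (Fintype.card_fin q).symm) hwu₁ hwu₂ hne (by grind)
  let c' := Function.update c w e
  have hstep : G.KempeStep c c' := kempeStep_update (fun u hu => (hc hu).symm) he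
  have hrestrict : {v | v ≠ w}.domRestrict c' = {v | v ≠ w}.domRestrict c :=
    funext fun v => Function.update_of_ne v.2 _ _
  have hdetached : ((G.kempeGraph c' a b).neighborSet w).Subsingleton := by
    intro u hu
    obtain ⟨-, hc'w, -⟩ := kempeGraph_adj.1 hu
    rw [show c' w = e from Function.update_self _ _ _] at hc'w
    rcases hab e hc'w with h | h
    exacts [(hew h).elim, (he u₁ hwu₁ h.symm).elim]
  refine ⟨_, .head hstep (.single (kempeStep_kempeSwap c' a b v₀)), ?_⟩
  rw [domRestrict_kempeSwap (houtside hdetached) v₀, hrestrict]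

theorem exists_kempeEquiv_domRestrict_eq (hdeg : G.degree w < q) {c : V → Fin q}
    (hc : G.IsProperColoring c) {d : {v : V | v ≠ w} → Fin q}
    (hd : (G.induce {v | v ≠ w}).KempeEquiv ({v | v ≠ w}.domRestrict c) d) :
    ∃ c', G.KempeEquiv c c' ∧ G.IsProperColoring c' ∧ {v | v ≠ w}.domRestrict c' = d := by
  induction hd with
  | refl => exact ⟨c, .refl, hc, rfl⟩
  | tail _ hstep ih =>
    obtain ⟨c', hcc', hc', rfl⟩ := ih
    obtain ⟨a, b, v₀, rfl⟩ := hstep.exists_eq_kempeSwap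
    obtain ⟨c'', hc'c'', hrestrict⟩ :=
      exists_kempeEquiv_domRestrict_eq_kempeSwap hdeg hc' a b v₀
    exact ⟨c'', Relation.ReflTransGen.trans hcc' hc'c'', hc'.of_kempeEquiv hc'c'', hrestrict⟩

end LiftAlongVertexDeletion

end SimpleGraph
theorem lasVergnas_meyniel {V : Type*} [Fintype V]
    (G : SimpleGraph V) [DecidableRel G.Adj] (w : V) (q : ℕ)
    (hdeg : G.degree w < q)
    (h : ∀ c₁ c₂ : {v : V | v ≠ w} → Fin q,
      (G.induce {v : V | v ≠ w}).IsProperColoring c₁ →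
      (G.induce {v : V | v ≠ w}).IsProperColoring c₂ →
      (G.induce {v : V | v ≠ w}).KempeEquiv c₁ c₂) :
    ∀ c₁ c₂ : V → Fin q, G.IsProperColoring c₁ → G.IsProperColoring c₂ →
      G.KempeEquiv c₁ c₂ := by
  classical
  intro c₁ c₂ hc₁ hc₂
  obtain ⟨c, hc₁c, hc, hcc₂⟩ := exists_kempeEquiv_domRestrict_eq hdeg hc₁
    (h _ _ (hc₁.domRestrict _) (hc₂.domRestrict _))
  have hagree : ∀ v (hv : v ≠ w), c v = c₂ v := fun v hv => congrFun hcc₂ ⟨v, hv⟩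
  have hc₂_eq : Function.update c w (c₂ w) = c₂ := by
    funext v
    by_cases hv : v = w
    · rw [hv, Function.update_self]
    · rw [Function.update_of_ne hv, hagree v hv]
  have hfree : ∀ u, G.Adj w u → c u ≠ c₂ w :=
    fun u hu => hagree u hu.ne' ▸ (hc₂ hu).symm
  exact hc₁c.tail (hc₂_eq ▸ kempeStep_update (fun u hu => (hc hu).symm) hfree)
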